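/- The tensor product of two passive states need not be passive: there exist a Hamiltonian H on ℂ^3 with simple eigenvalues and a passive state σ on ℂ^3 such that σ⊗σ is not passive with respect to H⊗1 + 1⊗H. -/

import Mathlib

open Matrix BigOperators
open scoped Classical ComplexOrder

noncomputable section

def energy {ι : Type*} [Fintype ι] (H ρ : Matrix ι ι ℂ) : ℝ :=
  (Matrix.trace (ρ * H)).re

def IsDensity {ι : Type*} [Fintype ι] [DecidableEq ι] (ρ : Matrix ι ι ℂ) : Prop :=
  ρ.PosSemidef ∧ ρ.trace = 1

def IsPassive {ι : Type*} [Fintype ι] [DecidableEq ι] (H σ : Matrix ι ι ℂ) : Prop :=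
  ∀ U ∈ Matrix.unitaryGroup ι ℂ, energy H σ ≤ energy H (U * σ * star U)

def vnEntropy {ι : Type*} [Fintype ι] [DecidableEq ι] (ρ : Matrix ι ι ℂ) : ℝ :=
  if h : ρ.IsHermitian then ∑ i, Real.negMulLog (h.eigenvalues i) else 0

def gibbs {ι : Type*} [Fintype ι] [DecidableEq ι] (H : Matrix ι ι ℂ) (β : ℝ) :
    Matrix ι ι ℂ :=
  (Matrix.trace (NormedSpace.exp ((-β : ℂ) • H)))⁻¹ • NormedSpace.exp ((-β : ℂ) • H)

def tensPow {d : ℕ} (n : ℕ) (ρ : Matrix (Fin d) (Fin d) ℂ) :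
    Matrix (Fin n → Fin d) (Fin n → Fin d) ℂ :=
  Matrix.of fun i j => ∏ m, ρ (i m) (j m)

def sumHam {d : ℕ} (n : ℕ) (H : Matrix (Fin d) (Fin d) ℂ) :
    Matrix (Fin n → Fin d) (Fin n → Fin d) ℂ :=
  Matrix.of fun i j => ∑ m, H (i m) (j m) * ∏ l ∈ Finset.univ.erase m, (if i l = j l then (1:ℂ) else 0)

/-! For a diagonal Hamiltonian and a state diagonal in the same basis, passivity means exactly
that populations never increase with energy (`Antivary p E`). After a unitary `U` the energy is
`∑ p j E i |U i j|²`, a linear function of the doubly stochastic matrix `(|U i j|²)`; by Birkhoff's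
theorem it is minimised at a permutation matrix, where the rearrangement inequality applies.
Conversely, swapping an inverted pair of levels strictly lowers the energy.

With energies `0, 2, 3` and populations `2/5, 7/20, 1/4` the state is passive, but in `σ ⊗ σ` the
level `|11⟩` of energy `4` carries population `49/400`, more than the `40/400` of the level `|02⟩`
of energy `3`. -/

section Energy

variable {ι : Type*} [Fintype ι] [DecidableEq ι]

lemma energy_diagonal_diagonal (E p : ι → ℝ) :
    energy (diagonal fun i => (E i : ℂ)) (diagonal fun i => (p i : ℂ)) = ∑ i, p i * E i := by
  simp [energy, trace, diagonal_mul_diagonal]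

lemma energy_diagonal_conj (E p : ι → ℝ) (U : Matrix ι ι ℂ) :
    energy (diagonal fun i => (E i : ℂ)) (U * diagonal (fun i => (p i : ℂ)) * star U)
      = ∑ i, ∑ j, p j * E i * Complex.normSq (U i j) := by
  simp only [energy, trace, diag, mul_diagonal, Matrix.mul_assoc, Complex.re_sum]
  refine Finset.sum_congr rfl fun i _ => ?_
  rw [mul_apply, Finset.sum_mul, Complex.re_sum]
  refine Finset.sum_congr rfl fun j _ => ?_
  rw [diagonal_mul, star_apply, Complex.star_def, Complex.normSq_apply]
  simp only [Complex.mul_re, Complex.mul_im, Complex.ofReal_re, Complex.ofReal_im,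
    Complex.conj_re, Complex.conj_im]
  ring

lemma normSq_mem_doublyStochastic {U : Matrix ι ι ℂ} (hU : U ∈ unitaryGroup ι ℂ) :
    (of fun i j => Complex.normSq (U i j)) ∈ doublyStochastic ℝ ι := by
  refine mem_doublyStochastic_iff_sum.2
    ⟨fun i j => Complex.normSq_nonneg _, fun i => ?_, fun j => ?_⟩
  · have := congr_fun₂ (mem_unitaryGroup_iff.1 hU) i i
    simp only [mul_apply, star_apply, Complex.star_def, Complex.mul_conj, one_apply_eq] at this
    exact_mod_cast this
  · have := congr_fun₂ (mem_unitaryGroup_iff'.1 hU) j j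
    simp only [mul_apply, star_apply, Complex.star_def, mul_comm (starRingEnd ℂ _),
      Complex.mul_conj, one_apply_eq] at this
    exact_mod_cast this

lemma permMatrix_mem_unitaryGroup (σ : Equiv.Perm ι) : σ.permMatrix ℂ ∈ unitaryGroup ι ℂ := by
  rw [mem_unitaryGroup_iff, star_eq_conjTranspose, conjTranspose_permMatrix, ← permMatrix_mul,
    inv_mul_cancel, permMatrix_one]

lemma energy_diagonal_conj_permMatrix (E p : ι → ℝ) (σ : Equiv.Perm ι) :
    energy (diagonal fun i => (E i : ℂ))
        (σ.permMatrix ℂ * diagonal (fun i => (p i : ℂ)) * star (σ.permMatrix ℂ))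
      = ∑ i, p (σ i) * E i := by
  rw [energy_diagonal_conj]
  simp [PEquiv.toMatrix_apply, apply_ite Complex.normSq]

lemma Antivary.sum_mul_le_of_mem_doublyStochastic {E p : ι → ℝ} (h : Antivary p E)
    {D : Matrix ι ι ℝ} (hD : D ∈ doublyStochastic ℝ ι) :
    ∑ i, p i * E i ≤ ∑ i, ∑ j, p j * E i * D i j := by
  have hlin : IsLinearMap ℝ fun M : Matrix ι ι ℝ => ∑ i, ∑ j, p j * E i * M i j :=
    ⟨fun M N => by simp only [Matrix.add_apply, mul_add, Finset.sum_add_distrib],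
      fun c M => by simp only [Matrix.smul_apply, smul_eq_mul, Finset.mul_sum, mul_left_comm c]⟩
  rw [← SetLike.mem_coe, doublyStochastic_eq_convexHull_permMatrix] at hD
  refine convexHull_min ?_ (convex_halfSpace_ge hlin _) hD
  rintro _ ⟨σ, rfl⟩
  simpa [PEquiv.toMatrix_apply] using h.sum_mul_le_sum_comp_perm_mul (σ := σ)

theorem isPassive_diagonal_iff_antivary (E p : ι → ℝ) :
    IsPassive (diagonal fun i => (E i : ℂ)) (diagonal fun i => (p i : ℂ)) ↔ Antivary p E := by
  refine ⟨fun h i j hE => ?_, fun h U hU => ?_⟩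
  · by_contra! hp
    have hswap := h _ (permMatrix_mem_unitaryGroup (Equiv.swap i j))
    rw [energy_diagonal_diagonal, energy_diagonal_conj_permMatrix, ← sub_nonneg,
      ← Finset.sum_sub_distrib, Fintype.sum_eq_add i j (ne_of_apply_ne E hE.ne) fun k hk => by
        simp [Equiv.swap_apply_of_ne_of_ne hk.1 hk.2]] at hswap
    simp only [Equiv.swap_apply_left, Equiv.swap_apply_right] at hswap
    -- the swap changes the energy by `(p j - p i) * (E i - E j) < 0`
    nlinarith
  · rw [energy_diagonal_diagonal, energy_diagonal_conj]
    exact h.sum_mul_le_of_mem_doublyStochastic (normSq_mem_doublyStochastic hU)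

end Energy

lemma Matrix.IsHermitian.injective_eigenvalues_of_nodup_roots {𝕜 n : Type*} [RCLike 𝕜]
    [Fintype n] [DecidableEq n] {A : Matrix n n 𝕜} (hA : A.IsHermitian)
    (h : A.charpoly.roots.Nodup) : Function.Injective hA.eigenvalues := by
  rw [hA.roots_charpoly_eq_eigenvalues, Multiset.nodup_map_iff_inj_on Finset.univ.nodup] at h
  exact fun i j hij => h i (Finset.mem_univ i) j (Finset.mem_univ j) (by simp [hij])

lemma nodup_roots_charpoly_diagonal {R n : Type*} [CommRing R] [IsDomain R] [Fintype n]
    [DecidableEq n] {d : n → R} (hd : Function.Injective d) :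
    (diagonal d).charpoly.roots.Nodup := by
  rw [charpoly_diagonal, Polynomial.roots_prod _ _ (by
    simp [Finset.prod_ne_zero_iff, Polynomial.X_sub_C_ne_zero])]
  simpa using Finset.univ.nodup.map hd

lemma tensPow_diagonal {d : ℕ} (n : ℕ) (p : Fin d → ℝ) :
    tensPow n (diagonal fun i => (p i : ℂ)) = diagonal fun i => ((∏ m, p (i m) : ℝ) : ℂ) := by
  ext i j
  obtain rfl | hij := eq_or_ne i j
  · simp [tensPow]
  · obtain ⟨m, hm⟩ := Function.ne_iff.1 hij
    rw [diagonal_apply_ne _ hij, tensPow, of_apply]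
    exact Finset.prod_eq_zero (Finset.mem_univ m) (diagonal_apply_ne _ hm)

lemma sumHam_diagonal {d : ℕ} (n : ℕ) (E : Fin d → ℝ) :
    sumHam n (diagonal fun i => (E i : ℂ)) = diagonal fun i => ((∑ m, E (i m) : ℝ) : ℂ) := by
  ext i j
  obtain rfl | hij := eq_or_ne i j
  · simp [sumHam]
  · obtain ⟨m, hm⟩ := Function.ne_iff.1 hij
    rw [diagonal_apply_ne _ hij, sumHam, of_apply]
    refine Finset.sum_eq_zero fun k _ => ?_
    obtain rfl | hk := eq_or_ne k m
    · rw [diagonal_apply_ne _ hm, zero_mul]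
    · rw [Finset.prod_eq_zero (Finset.mem_erase.2 ⟨hk.symm, Finset.mem_univ m⟩) (if_neg hm),
        mul_zero]

theorem product_of_passive_not_passive :
    ∃ (H σ : Matrix (Fin 3) (Fin 3) ℂ) (hH : H.IsHermitian),
      Function.Injective hH.eigenvalues ∧ IsDensity σ ∧ IsPassive H σ ∧
        ¬ IsPassive (sumHam 2 H) (tensPow 2 σ) := by
  let E : Fin 3 → ℝ := ![0, 2, 3]
  let p : Fin 3 → ℝ := ![2/5, 7/20, 1/4]
  have hH : (diagonal fun i => (E i : ℂ)).IsHermitian :=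
    isHermitian_diagonal_of_self_adjoint _ (funext fun i => Complex.conj_ofReal (E i))
  refine ⟨_, diagonal fun i => (p i : ℂ), hH, ?_, ?_, ?_, ?_⟩
  · refine hH.injective_eigenvalues_of_nodup_roots (nodup_roots_charpoly_diagonal ?_)
    intro i j
    fin_cases i <;> fin_cases j <;> norm_num [E]
  · refine ⟨posSemidef_diagonal_iff.2 fun i => ?_, ?_⟩
    · exact Complex.zero_le_real.2 (by fin_cases i <;> norm_num [p])
    · norm_num [Fin.sum_univ_three, p, Matrix.cons_val_two]
  · rw [isPassive_diagonal_iff_antivary]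
    intro i j
    fin_cases i <;> fin_cases j <;> norm_num [E, p]
  · rw [sumHam_diagonal, tensPow_diagonal, isPassive_diagonal_iff_antivary]
    intro h
    have := h (i := ![0, 2]) (j := ![1, 1]) (by norm_num [E, Matrix.cons_val_two])
    norm_num [p, Matrix.cons_val_two] at this
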